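/- Let d ≥ 1, let P be a real polynomial in one variable with deg P ≤ d, let ρ ≥ 0, set V_ρ = {x ∈ [0,1] : |P(x)| ≤ ρ}, and let Z ⊆ V_ρ. Then for every ε > 0, μ_1(V_ρ) ≥ ε·(M(ε,Z) − d). -/
import Mathlib

open Polynomial MeasureTheory Set

/-- The covering number `M(ε, A)`: the minimal number of closed intervals of length `ε`
(i.e. closed balls of radius `ε/2`) whose union contains `A`. -/
noncomputable def covN (ε : ℝ) (A : Set ℝ) : ℕ :=
  sInf {N : ℕ | ∃ c : Fin N → ℝ, A ⊆ ⋃ i, Metric.closedBall (c i) (ε / 2)}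

private lemma covN_le_of_cover {ε : ℝ} {A : Set ℝ} {K : ℕ} (c : Fin K → ℝ)
    (h : A ⊆ ⋃ i, Metric.closedBall (c i) (ε / 2)) : covN ε A ≤ K :=
  Nat.sInf_le ⟨c, h⟩

private lemma exists_chain {ε δ : ℝ} (hδ : 0 < δ) :
    ∀ (m : ℕ) (Z : Set ℝ), BddBelow Z →
      (∀ c : Fin m → ℝ, ¬ Z ⊆ ⋃ i, Metric.closedBall (c i) (ε / 2)) →
      ∃ z : ℕ → ℝ, (∀ i ≤ m, z i ∈ Z) ∧ (∀ i < m, z i + (ε - δ) < z (i + 1)) ∧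
        z 0 < sInf Z + δ := by
  intro m
  induction m with
  | zero =>
    intro Z hbdd hc
    have hne : Z.Nonempty := by
      by_contra h
      exact hc (fun _ => 0) (by rw [Set.not_nonempty_iff_eq_empty.1 h]; exact empty_subset _)
    obtain ⟨z0, hz0, hlt⟩ := Real.lt_sInf_add_pos hne hδ
    exact ⟨fun _ => z0, fun i _ => hz0, fun i h => absurd h (Nat.not_lt_zero i), hlt⟩
  | succ m ih =>
    intro Z hbdd hc
    have hne : Z.Nonempty := by
      by_contra h
      exact hc (fun _ => 0) (by rw [Set.not_nonempty_iff_eq_empty.1 h]; exact empty_subset _)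
    obtain ⟨z0, hz0, hlt⟩ := Real.lt_sInf_add_pos hne hδ
    set a := sInf Z with ha
    set Z' := {w ∈ Z | a + ε < w} with hZ'
    have hc' : ∀ c : Fin m → ℝ, ¬ Z' ⊆ ⋃ i, Metric.closedBall (c i) (ε / 2) := by
      intro c hsub
      apply hc (Fin.cons (a + ε / 2) c)
      intro w hw
      by_cases hcase : a + ε < w
      · obtain ⟨_, ⟨i, rfl⟩, hmem⟩ := hsub ⟨hw, hcase⟩
        exact Set.mem_iUnion.2 ⟨i.succ, by simpa using hmem⟩
      · refine Set.mem_iUnion.2 ⟨0, ?_⟩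
        simp only [Fin.cons_zero, Metric.mem_closedBall, Real.dist_eq]
        have h1 : a ≤ w := csInf_le hbdd hw
        push_neg at hcase
        rw [abs_le]; constructor <;> linarith
    have hbdd' : BddBelow Z' := ⟨a + ε, fun x hx => hx.2.le⟩
    obtain ⟨z', hz'mem, hz'gap, _⟩ := ih Z' hbdd' hc'
    have hz'0 : a + ε < z' 0 := (hz'mem 0 (Nat.zero_le m)).2
    refine ⟨fun i => match i with | 0 => z0 | (n+1) => z' n, ?_, ?_, hlt⟩
    · intro i hi
      match i with
      | 0 => exact hz0
      | (n+1) => exact (hz'mem n (by omega)).1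
    · intro i hi
      match i with
      | 0 => simpa using by linarith
      | (n+1) => exact hz'gap n (by omega)

open Filter in
private lemma core (d : ℕ) (P : Polynomial ℝ) (hd1 : 1 ≤ P.natDegree) (hP : P.natDegree ≤ d)
    (ρ' : ℝ) (hρ' : 0 < ρ') (N : ℕ) (hN : d + 1 ≤ N) (ε η : ℝ) (hη : 0 < η) (hηε : η < ε)
    (z : ℕ → ℝ)
    (hz01 : ∀ i ≤ N - 1, z i ∈ Icc (0:ℝ) 1)
    (hzρ : ∀ i ≤ N - 1, (P.eval (z i))^2 < ρ'^2)
    (gap : ∀ i < N - 1, z i + (ε - η) < z (i + 1)) :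
    ENNReal.ofReal (((N : ℝ) - d) * (ε - η)) ≤ volume {x ∈ Icc (0:ℝ) 1 | |P.eval x| ≤ ρ'} := by
  classical
  set Q : Polynomial ℝ := P^2 - C (ρ'^2) with hQdef
  have hQeval : ∀ x : ℝ, Q.eval x = (P.eval x)^2 - ρ'^2 := by
    intro x; simp [hQdef]
  have hQdeg : Q.natDegree = 2 * P.natDegree := by
    rw [hQdef, natDegree_sub_C, natDegree_pow]
  have hQ0 : Q ≠ 0 := by
    intro h
    rw [h, natDegree_zero] at hQdeg
    omega
  have hQle : Q.natDegree ≤ 2 * d := by omega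
  -- leading coefficient of Q is positive
  have hdegCP : (C (ρ'^2)).degree < (P^2).degree := by
    apply lt_of_le_of_lt (degree_C_le)
    rw [← natDegree_pos_iff_degree_pos, natDegree_pow]
    omega
  have hlcQ : Q.leadingCoeff = P.leadingCoeff ^ 2 := by
    rw [hQdef, sub_eq_add_neg, add_comm, leadingCoeff_add_of_degree_lt (by simpa using hdegCP),
      leadingCoeff_pow]
  have hP0 : P ≠ 0 := fun h => by simp [h] at hd1
  have hlcpos : 0 < Q.leadingCoeff := by
    rw [hlcQ]
    exact pow_two_pos_of_ne_zero (leadingCoeff_ne_zero.2 hP0)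
  have hQdegpos : 0 < Q.degree := by
    rw [← natDegree_pos_iff_degree_pos]; omega
  have hT1 : Tendsto (fun x => Q.eval x) atTop atTop :=
    Q.tendsto_atTop_of_leadingCoeff_nonneg hQdegpos hlcpos.le
  -- behaviour at -infinity
  set Qn : Polynomial ℝ := Q.comp (-X) with hQndef
  have hQneval : ∀ x : ℝ, Qn.eval x = Q.eval (-x) := by
    intro x; simp [hQndef, eval_comp]
  have hQndeg : Qn.natDegree = Q.natDegree := by
    rw [hQndef, natDegree_comp]; simp
  have hlcQn : Qn.leadingCoeff = Q.leadingCoeff := by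
    rw [hQndef, leadingCoeff_comp (by simp)]
    simp only [leadingCoeff_neg, leadingCoeff_X]
    rw [hQdeg, (even_two_mul _).neg_one_pow, mul_one]
  have hQndegpos : 0 < Qn.degree := by
    rw [← natDegree_pos_iff_degree_pos, hQndeg]
    rw [← natDegree_pos_iff_degree_pos] at hQdegpos; exact hQdegpos
  have hT2 : Tendsto (fun x => Qn.eval x) atTop atTop :=
    Qn.tendsto_atTop_of_leadingCoeff_nonneg hQndegpos (hlcQn ▸ hlcpos.le)
  -- pick witnesses outside the chain where Q is positive
  obtain ⟨yR, hyR⟩ := ((hT1.eventually_gt_atTop 0).and (eventually_gt_atTop (z (N-1)))).exists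
  obtain ⟨x0, hx0⟩ := ((hT2.eventually_gt_atTop 0).and (eventually_gt_atTop (-(z 0)))).exists
  set yL : ℝ := -x0 with hyLdef
  have hyL1 : 0 < Q.eval yL := by rw [← hQneval]; exact hx0.1
  have hyL2 : yL < z 0 := by have := hx0.2; simp only [hyLdef]; linarith
  -- monotonicity of the chain
  have hstep : ∀ i < N - 1, z i < z (i + 1) := by
    intro i hi; have := gap i hi; linarith
  have zmono : ∀ j ≤ N - 1, ∀ i < j, z i < z j := by
    intro j
    induction j with
    | zero => omega
    | succ n ihn =>
      intro hj i hi
      have hzn : z n < z (n + 1) := hstep n (by omega)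
      rcases Nat.lt_succ_iff_lt_or_eq.1 hi with h | h
      · exact lt_trans (ihn (by omega) i h) hzn
      · rw [h]; exact hzn
  have zle : ∀ i j, i ≤ j → j ≤ N - 1 → z i ≤ z j := by
    intro i j hij hj
    rcases eq_or_lt_of_le hij with h | h
    · rw [h]
    · exact (zmono j hj i h).le
  -- IVT helpers
  have hQcont : Continuous fun x : ℝ => Q.eval x := Q.continuous
  have ivt : ∀ a b : ℝ, a < b → Q.eval a < 0 → 0 < Q.eval b →
      ∃ r ∈ Ioo a b, Q.eval r = 0 := by
    intro a b hab h1 h2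
    obtain ⟨r, hr, hr0⟩ := intermediate_value_Ioo hab.le hQcont.continuousOn ⟨h1, h2⟩
    exact ⟨r, hr, hr0⟩
  have ivt' : ∀ a b : ℝ, a < b → 0 < Q.eval a → Q.eval b < 0 →
      ∃ r ∈ Ioo a b, Q.eval r = 0 := by
    intro a b hab h1 h2
    obtain ⟨r, hr, hr0⟩ := intermediate_value_Ioo' hab.le hQcont.continuousOn ⟨h2, h1⟩
    exact ⟨r, hr, hr0⟩
  have hQz : ∀ i ≤ N - 1, Q.eval (z i) < 0 := by
    intro i hi; rw [hQeval]; have := hzρ i hi; linarith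
  -- bad gaps
  set G : Finset ℕ := Finset.range (N - 1) with hGdef
  set bad : Finset ℕ :=
    G.filter (fun i => ∃ w ∈ Ioo (z i) (z (i+1)), ρ'^2 < (P.eval w)^2) with hbaddef
  have hbadG : bad ⊆ G := Finset.filter_subset _ _
  -- choose a witness in each bad gap
  set y : ℕ → ℝ := fun i =>
    if h : ∃ w ∈ Ioo (z i) (z (i+1)), ρ'^2 < (P.eval w)^2 then h.choose else 0 with hydef
  have hy : ∀ i ∈ bad, y i ∈ Ioo (z i) (z (i+1)) ∧ 0 < Q.eval (y i) := by
    intro i hi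
    have h := (Finset.mem_filter.1 hi).2
    have hspec := h.choose_spec
    simp only [hydef, dif_pos h]
    refine ⟨hspec.1, ?_⟩
    rw [hQeval]; have := hspec.2; linarith
  -- two roots inside each bad gap
  have hiG : ∀ i ∈ bad, i < N - 1 := by
    intro i hi; exact Finset.mem_range.1 (hbadG hi)
  set r1 : ℕ → ℝ := fun i =>
    if h : ∃ r ∈ Ioo (z i) (y i), Q.eval r = 0 then h.choose else 0 with hr1def
  set r2 : ℕ → ℝ := fun i =>
    if h : ∃ r ∈ Ioo (y i) (z (i+1)), Q.eval r = 0 then h.choose else 0 with hr2def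
  have hr1 : ∀ i ∈ bad, r1 i ∈ Ioo (z i) (y i) ∧ Q.eval (r1 i) = 0 := by
    intro i hi
    obtain ⟨hyIoo, hyQ⟩ := hy i hi
    have h := ivt (z i) (y i) hyIoo.1 (hQz i (by have := hiG i hi; omega)) hyQ
    have hspec := h.choose_spec
    simp only [hr1def, dif_pos h]
    exact hspec
  have hr2 : ∀ i ∈ bad, r2 i ∈ Ioo (y i) (z (i+1)) ∧ Q.eval (r2 i) = 0 := by
    intro i hi
    obtain ⟨hyIoo, hyQ⟩ := hy i hi
    have h := ivt' (y i) (z (i+1)) hyIoo.2 hyQ (hQz (i+1) (by have := hiG i hi; omega))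
    have hspec := h.choose_spec
    simp only [hr2def, dif_pos h]
    exact hspec
  -- boundary roots
  obtain ⟨rL, hrLIoo, hrLQ⟩ := ivt' yL (z 0) hyL2 hyL1 (hQz 0 (Nat.zero_le _))
  obtain ⟨rR, hrRIoo, hrRQ⟩ := ivt (z (N-1)) yR hyR.2 (hQz (N-1) le_rfl) hyR.1
  -- basic ordering facts
  have key : ∀ i ∈ bad, z i < r1 i ∧ r1 i < r2 i ∧ r2 i < z (i+1) := by
    intro i hi
    obtain ⟨h1, _⟩ := hr1 i hi
    obtain ⟨h2, _⟩ := hr2 i hi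
    obtain ⟨hyIoo, _⟩ := hy i hi
    exact ⟨h1.1, lt_trans h1.2 h2.1, h2.2⟩
  have cross : ∀ i ∈ bad, ∀ j ∈ bad, i < j → r2 i < r1 j := by
    intro i hi j hj hij
    have h1 := (key i hi).2.2
    have h2 := (key j hj).1
    have h3 : z (i+1) ≤ z j := zle (i+1) j (by omega) (by have := hiG j hj; omega)
    linarith
  have hinj1 : Set.InjOn r1 ↑bad := by
    intro i hi j hj hij
    by_contra hne
    rcases Nat.lt_or_ge i j with h | h
    · have := cross i (by simpa using hi) j (by simpa using hj) h
      have := (key i (by simpa using hi)).2.1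
      linarith [hij.le]
    · have hlt : j < i := by omega
      have := cross j (by simpa using hj) i (by simpa using hi) hlt
      have := (key j (by simpa using hj)).2.1
      linarith [hij.ge]
  have hinj2 : Set.InjOn r2 ↑bad := by
    intro i hi j hj hij
    by_contra hne
    rcases Nat.lt_or_ge i j with h | h
    · have := cross i (by simpa using hi) j (by simpa using hj) h
      have := (key j (by simpa using hj)).2.1
      linarith [hij.le]
    · have hlt : j < i := by omega
      have := cross j (by simpa using hj) i (by simpa using hi) hlt
      have := (key i (by simpa using hi)).2.1
      linarith [hij.ge]
  have hdisj12 : Disjoint (bad.image r1) (bad.image r2) := by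
    rw [Finset.disjoint_left]
    intro x hx1 hx2
    obtain ⟨i, hi, rfl⟩ := Finset.mem_image.1 hx1
    obtain ⟨j, hj, hji⟩ := Finset.mem_image.1 hx2
    rcases lt_trichotomy i j with h | h | h
    · have := cross i hi j hj h
      have := (key j hj).2.1
      have := (key i hi).2.1
      linarith [hji.le]
    · subst h
      have := (key i hi).2.1
      linarith [hji.le]
    · have := cross j hj i hi h
      have := (key i hi).2.1
      linarith [hji.ge]
  -- rL and rR are outside
  have hz0le : ∀ i ∈ bad, z 0 ≤ z i := fun i hi =>
    zle 0 i (Nat.zero_le _) (by have := hiG i hi; omega)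
  have hzNle : ∀ i ∈ bad, z (i+1) ≤ z (N-1) := fun i hi =>
    zle (i+1) (N-1) (by have := hiG i hi; omega) le_rfl
  have hrLlt : ∀ i ∈ bad, rL < r1 i ∧ rL < r2 i := by
    intro i hi
    have h1 := (key i hi).1
    have h2 := (key i hi).2.1
    have := hz0le i hi
    have := hrLIoo.2
    constructor <;> linarith
  have hrRgt : ∀ i ∈ bad, r1 i < rR ∧ r2 i < rR := by
    intro i hi
    have h1 := (key i hi).2.1
    have h2 := (key i hi).2.2
    have := hzNle i hi
    have := hrRIoo.1
    constructor <;> linarith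
  have hrLR : rL ≠ rR := by
    intro h
    have h0 : z 0 ≤ z (N-1) := zle 0 (N-1) (Nat.zero_le _) le_rfl
    have h1 := hrLIoo.2
    have h2 := hrRIoo.1
    rw [h] at h1
    linarith
  -- cardinality count
  set Tbig : Finset ℝ := bad.image r1 ∪ bad.image r2 with hTbigdef
  set T : Finset ℝ := Tbig ∪ {rL, rR} with hTdef
  have hrLnotin : rL ∉ Tbig := by
    intro hx
    rcases Finset.mem_union.1 hx with h | h <;> obtain ⟨i, hi, hix⟩ := Finset.mem_image.1 h
    · have := (hrLlt i hi).1; rw [hix] at this; exact lt_irrefl _ this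
    · have := (hrLlt i hi).2; rw [hix] at this; exact lt_irrefl _ this
  have hrRnotin : rR ∉ Tbig := by
    intro hx
    rcases Finset.mem_union.1 hx with h | h <;> obtain ⟨i, hi, hix⟩ := Finset.mem_image.1 h
    · have := (hrRgt i hi).1; rw [hix] at this; exact lt_irrefl _ this
    · have := (hrRgt i hi).2; rw [hix] at this; exact lt_irrefl _ this
  have hdisjLR : Disjoint Tbig ({rL, rR} : Finset ℝ) := by
    rw [Finset.disjoint_right]
    intro x hx
    rcases Finset.mem_insert.1 hx with h | h
    · rw [h]; exact hrLnotin
    · rw [Finset.mem_singleton.1 h]; exact hrRnotin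
  have hcardT : T.card = bad.card + bad.card + 2 := by
    rw [hTdef, Finset.card_union_of_disjoint hdisjLR, hTbigdef,
      Finset.card_union_of_disjoint hdisj12, Finset.card_image_of_injOn hinj1,
      Finset.card_image_of_injOn hinj2, Finset.card_pair hrLR]
  have hTsub : T ⊆ Q.roots.toFinset := by
    intro x hx
    rw [Multiset.mem_toFinset, mem_roots']
    refine ⟨hQ0, ?_⟩
    rcases Finset.mem_union.1 hx with h | h
    · rcases Finset.mem_union.1 h with h' | h' <;> obtain ⟨i, hi, rfl⟩ := Finset.mem_image.1 h'
      · exact (hr1 i hi).2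
      · exact (hr2 i hi).2
    · rcases Finset.mem_insert.1 h with h' | h'
      · rw [h']; exact hrLQ
      · rw [Finset.mem_singleton.1 h']; exact hrRQ
  have hbadcard : bad.card + 1 ≤ d := by
    have h1 : T.card ≤ Q.roots.toFinset.card := Finset.card_le_card hTsub
    have h2 : Q.roots.toFinset.card ≤ Multiset.card Q.roots := Multiset.toFinset_card_le _
    have h3 : Multiset.card Q.roots ≤ Q.natDegree := Q.card_roots'
    omega
  -- good gaps
  set good : Finset ℕ := G \ bad with hgooddef
  have hgoodcard : N - d ≤ good.card := by
    have h1 : good.card = G.card - bad.card := Finset.card_sdiff_of_subset hbadG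
    have h2 : G.card = N - 1 := Finset.card_range _
    omega
  have hgoodsub : ∀ i ∈ good, Ioo (z i) (z (i+1)) ⊆ {x ∈ Icc (0:ℝ) 1 | |P.eval x| ≤ ρ'} := by
    intro i hi x hx
    have hiGmem : i ∈ G := (Finset.mem_sdiff.1 hi).1
    have hinb : i ∉ bad := (Finset.mem_sdiff.1 hi).2
    have hiN : i < N - 1 := Finset.mem_range.1 hiGmem
    have hno : ¬ ∃ w ∈ Ioo (z i) (z (i+1)), ρ'^2 < (P.eval w)^2 := fun h =>
      hinb (Finset.mem_filter.2 ⟨hiGmem, h⟩)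
    push_neg at hno
    have hle : (P.eval x)^2 ≤ ρ'^2 := hno x hx
    have habs : |P.eval x| ≤ ρ' := by
      rw [← Real.sqrt_sq_eq_abs, ← Real.sqrt_sq hρ'.le]
      exact Real.sqrt_le_sqrt hle
    refine ⟨⟨?_, ?_⟩, habs⟩
    · exact le_trans (hz01 i (by omega)).1 hx.1.le
    · exact le_trans hx.2.le (hz01 (i+1) (by omega)).2
  have hpd : (↑good : Set ℕ).PairwiseDisjoint (fun i => Ioo (z i) (z (i+1))) := by
    intro i hi j hj hij
    have hiN : i < N - 1 := Finset.mem_range.1 (Finset.mem_sdiff.1 (Finset.mem_coe.1 hi)).1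
    have hjN : j < N - 1 := Finset.mem_range.1 (Finset.mem_sdiff.1 (Finset.mem_coe.1 hj)).1
    rw [Function.onFun]
    rw [Set.disjoint_left]
    intro x hxi hxj
    rcases Nat.lt_or_ge i j with h | h
    · have : z (i+1) ≤ z j := zle (i+1) j (by omega) (by omega)
      have := hxi.2; have := hxj.1; linarith
    · have hji : j < i := by omega
      have : z (j+1) ≤ z i := zle (j+1) i (by omega) (by omega)
      have := hxj.2; have := hxi.1; linarith
  have hcast : ((N:ℝ) - d) = ((N - d : ℕ) : ℝ) := by
    have hdN : d ≤ N := by omega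
    rw [Nat.cast_sub hdN]
  calc ENNReal.ofReal (((N : ℝ) - d) * (ε - η))
      = ((N - d : ℕ) : ENNReal) * ENNReal.ofReal (ε - η) := by
        rw [hcast, ENNReal.ofReal_mul (by positivity), ENNReal.ofReal_natCast]
    _ ≤ (good.card : ENNReal) * ENNReal.ofReal (ε - η) :=
        mul_le_mul_left (Nat.cast_le.2 hgoodcard) _
    _ = ∑ _i ∈ good, ENNReal.ofReal (ε - η) := by
        rw [Finset.sum_const, nsmul_eq_mul]
    _ ≤ ∑ i ∈ good, ENNReal.ofReal (z (i+1) - z i) := by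
        apply Finset.sum_le_sum
        intro i hi
        have hiN : i < N - 1 := Finset.mem_range.1 (Finset.mem_sdiff.1 hi).1
        have := gap i hiN
        exact ENNReal.ofReal_le_ofReal (by linarith)
    _ = ∑ i ∈ good, volume (Ioo (z i) (z (i+1))) := by
        simp [Real.volume_Ioo]
    _ = volume (⋃ i ∈ good, Ioo (z i) (z (i+1))) :=
        (measure_biUnion_finset hpd (fun i _ => measurableSet_Ioo)).symm
    _ ≤ volume {x ∈ Icc (0:ℝ) 1 | |P.eval x| ≤ ρ'} :=
        measure_mono (Set.iUnion₂_subset hgoodsub)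


/-- One-dimensional case: if `deg P ≤ d` and `Z ⊆ V_ρ(P)` then
`μ_1(V_ρ(P)) ≥ ε (M(ε,Z) − d)` for every `ε > 0`. -/
theorem sublevel_volume_ge_span_dim_one (d : ℕ) (hd : 1 ≤ d) (P : Polynomial ℝ)
    (hP : P.natDegree ≤ d) (ρ : ℝ) (hρ : 0 ≤ ρ)
    (Z : Set ℝ) (hZ : Z ⊆ {x ∈ Icc (0 : ℝ) 1 | |P.eval x| ≤ ρ}) :
    ∀ ε : ℝ, 0 < ε →
      ε * ((covN ε Z : ℝ) - d) ≤ (volume {x ∈ Icc (0 : ℝ) 1 | |P.eval x| ≤ ρ}).toReal := by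
  intro ε hε
  set V := {x ∈ Icc (0 : ℝ) 1 | |P.eval x| ≤ ρ} with hVdef
  have hVsub : V ⊆ Icc (0:ℝ) 1 := fun x hx => hx.1
  have hVfin : volume V ≠ ⊤ := by
    refine ne_top_of_le_ne_top ?_ (measure_mono hVsub)
    simp [Real.volume_Icc]
  set N := covN ε Z with hNdef
  by_cases hNd : N ≤ d
  · refine le_trans ?_ ENNReal.toReal_nonneg
    apply mul_nonpos_of_nonneg_of_nonpos hε.le
    have : (N:ℝ) ≤ d := Nat.cast_le.2 hNd
    linarith
  push_neg at hNd
  by_cases hdeg : P.natDegree = 0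
  · -- constant polynomial case
    have hPC : P = C (P.coeff 0) := Polynomial.eq_C_of_natDegree_eq_zero hdeg
    set c := P.coeff 0 with hc
    have hev : ∀ x : ℝ, P.eval x = c := by intro x; rw [hPC]; simp
    by_cases habs : |c| ≤ ρ
    · have hV : V = Icc (0:ℝ) 1 := by
        ext x
        simp only [hVdef, Set.mem_setOf_eq, hev, Set.mem_Icc]
        tauto
      set K := ⌈1/ε⌉₊ with hK
      have hK1 : 1 ≤ K := Nat.one_le_iff_ne_zero.2 (by
        intro h
        have := Nat.ceil_eq_zero.1 h
        have : (0:ℝ) < 1/ε := by positivity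
        linarith)
      have hcov : N ≤ K := by
        apply covN_le_of_cover (fun i : Fin K => ε/2 + i * ε)
        intro x hx
        have hx01 : x ∈ Icc (0:ℝ) 1 := (hZ hx).1
        have hx0 : (0:ℝ) ≤ x := hx01.1
        set j : ℕ := min ⌊x/ε⌋₊ (K-1) with hj
        have hjK : j < K := by omega
        refine Set.mem_iUnion.2 ⟨⟨j, hjK⟩, ?_⟩
        simp only [Metric.mem_closedBall, Real.dist_eq]
        rw [abs_le]
        have hgoal : (j:ℝ) * ε ≤ x ∧ x ≤ ((j:ℝ)+1) * ε := by
          by_cases hfl : ⌊x/ε⌋₊ < K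
          · have hjeq : j = ⌊x/ε⌋₊ := by omega
            rw [hjeq]
            constructor
            · have h1 : (⌊x/ε⌋₊ : ℝ) ≤ x/ε := Nat.floor_le (by positivity)
              calc (⌊x/ε⌋₊:ℝ) * ε ≤ (x/ε) * ε := by nlinarith
                _ = x := by field_simp
            · have h2 : x/ε < (⌊x/ε⌋₊ : ℝ) + 1 := Nat.lt_floor_add_one _
              calc x = (x/ε) * ε := by field_simp
                _ ≤ ((⌊x/ε⌋₊:ℝ)+1) * ε := by nlinarith
          · have hjeq : j = K - 1 := by omega
            have hKfl : (K:ℝ) ≤ ⌊x/ε⌋₊ := Nat.cast_le.2 (by omega)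
            have h1 : (⌊x/ε⌋₊ : ℝ) ≤ x/ε := Nat.floor_le (by positivity)
            have hKcast : ((j:ℝ)+1) = (K:ℝ) := by
              rw [hjeq, Nat.cast_sub hK1]; simp
            constructor
            · have : (j:ℝ) ≤ (K:ℝ) := by rw [← hKcast]; linarith
              have h2 : (K:ℝ) * ε ≤ x := by
                have : (K:ℝ) ≤ x/ε := le_trans hKfl h1
                calc (K:ℝ) * ε ≤ (x/ε) * ε := by nlinarith
                  _ = x := by field_simp
              have hj1K : (j:ℝ) + 1 ≤ (K:ℝ) := by rw [hKcast]
              nlinarith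
            · have h3 : (1:ℝ) ≤ K * ε := by
                have := Nat.le_ceil (1/ε)
                have : (1:ℝ)/ε ≤ K := this
                calc (1:ℝ) = (1/ε) * ε := by field_simp
                  _ ≤ (K:ℝ) * ε := by nlinarith
              rw [hKcast]
              linarith [hx01.2]
        constructor <;> [linarith [hgoal.1]; linarith [hgoal.2]]
      have hvol : (volume V).toReal = 1 := by
        rw [hV, Real.volume_Icc]
        simp
      rw [hvol]
      have hceil : (K:ℝ) < 1/ε + 1 := Nat.ceil_lt_add_one (by positivity)
      have hNK : (N:ℝ) ≤ K := Nat.cast_le.2 hcov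
      have hd1 : (1:ℝ) ≤ d := by exact_mod_cast hd
      have h1 : ε * ((N:ℝ) - d) ≤ ε * ((K:ℝ) - 1) := by
        apply mul_le_mul_of_nonneg_left ?_ hε.le
        linarith
      have h2 : ε * ((K:ℝ) - 1) ≤ 1 := by
        have : (K:ℝ) - 1 ≤ 1/ε := by linarith
        calc ε * ((K:ℝ) - 1) ≤ ε * (1/ε) := mul_le_mul_of_nonneg_left this hε.le
          _ = 1 := by field_simp
      linarith
    · exfalso
      have hZempty : ∀ x, x ∉ Z := by
        intro x hx
        exact habs (by rw [← hev x]; exact (hZ hx).2)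
      have h0 : N ≤ 0 := by
        apply covN_le_of_cover (fun i : Fin 0 => (0:ℝ))
        intro x hx
        exact absurd hx (hZempty x)
      omega
  -- main case : nonconstant polynomial
  have hd1 : 1 ≤ P.natDegree := Nat.one_le_iff_ne_zero.2 hdeg
  set g : ℕ → ℝ := fun n => min (ε/2) (1/(n+1)) with hg
  have hg0 : ∀ n, 0 < g n := fun n => lt_min (half_pos hε) (by positivity)
  have hgε : ∀ n, g n < ε := fun n => lt_of_le_of_lt (min_le_left _ _) (half_lt_self hε)
  have hgtend : Filter.Tendsto g Filter.atTop (nhds 0) := by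
    have h1 : Filter.Tendsto (fun n : ℕ => 1/((n:ℝ)+1)) Filter.atTop (nhds 0) :=
      tendsto_one_div_add_atTop_nhds_zero_nat
    have h2 := (tendsto_const_nhds (x := ε/2) (f := Filter.atTop (α := ℕ))).min h1
    rwa [min_eq_right (half_pos hε).le] at h2
  set W : ℕ → Set ℝ := fun n => {x ∈ Icc (0:ℝ) 1 | |P.eval x| ≤ ρ + g n} with hW
  have hWclosed : ∀ n, IsClosed (W n) := by
    intro n
    have : W n = Icc (0:ℝ) 1 ∩ {x | |P.eval x| ≤ ρ + g n} := rfl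
    rw [this]
    exact isClosed_Icc.inter (isClosed_le (continuous_abs.comp P.continuous) continuous_const)
  have hWfin : ∀ n, volume (W n) ≠ ⊤ := by
    intro n
    refine ne_top_of_le_ne_top ?_ (measure_mono (fun x hx => hx.1))
    simp [Real.volume_Icc]
  have hkey : ∀ n, ((N:ℝ) - d) * (ε - g n) ≤ (volume (W n)).toReal := by
    intro n
    have hno : ∀ c : Fin (N-1) → ℝ, ¬ Z ⊆ ⋃ i, Metric.closedBall (c i) (ε / 2) := by
      intro c hcsub
      have := covN_le_of_cover c hcsub
      omega
    obtain ⟨z, hzmem, hzgap, _⟩ :=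
      exists_chain (hg0 n) (N-1) Z ⟨0, fun x hx => (hZ hx).1.1⟩ hno
    have hcore := core d P hd1 hP (ρ + g n) (by linarith [hg0 n]) N (by omega) ε (g n)
      (hg0 n) (hgε n) z
      (fun i hi => (hZ (hzmem i hi)).1)
      (fun i hi => by
        have h1 : |P.eval (z i)| ≤ ρ := (hZ (hzmem i hi)).2
        have h2 := hg0 n
        nlinarith [abs_nonneg (P.eval (z i)), sq_abs (P.eval (z i))])
      hzgap
    have hnn : (0:ℝ) ≤ ((N:ℝ) - d) * (ε - g n) := by
      have : (d:ℝ) + 1 ≤ N := by exact_mod_cast hNd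
      have := hgε n
      nlinarith
    calc ((N:ℝ) - d) * (ε - g n)
        = (ENNReal.ofReal (((N:ℝ) - d) * (ε - g n))).toReal :=
          (ENNReal.toReal_ofReal hnn).symm
      _ ≤ (volume (W n)).toReal := ENNReal.toReal_mono (hWfin n) hcore
  have hWanti : Antitone W := by
    intro n m hnm x hx
    refine ⟨hx.1, le_trans hx.2 ?_⟩
    have : g m ≤ g n := by
      apply min_le_min le_rfl
      apply one_div_le_one_div_of_le (by positivity)
      have : (n:ℝ) ≤ m := Nat.cast_le.2 hnm
      linarith
    linarith
  have hInter : ⋂ n, W n = V := by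
    ext x
    simp only [Set.mem_iInter, hW, hVdef, Set.mem_setOf_eq]
    constructor
    · intro h
      refine ⟨(h 0).1, ?_⟩
      have hten : Filter.Tendsto (fun n : ℕ => ρ + g n) Filter.atTop (nhds ρ) := by
        simpa using tendsto_const_nhds.add hgtend
      exact ge_of_tendsto' hten (fun n => (h n).2)
    · intro h n
      exact ⟨h.1, le_trans h.2 (by linarith [hg0 n])⟩
  have hTen : Filter.Tendsto (fun n => volume (W n)) Filter.atTop (nhds (volume V)) := by
    have := tendsto_measure_iInter_atTop
      (fun n => ((hWclosed n).measurableSet.nullMeasurableSet)) hWanti ⟨0, hWfin 0⟩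
    rwa [hInter] at this
  have hTenR : Filter.Tendsto (fun n => (volume (W n)).toReal) Filter.atTop
      (nhds (volume V).toReal) := (ENNReal.tendsto_toReal hVfin).comp hTen
  have hL : Filter.Tendsto (fun n => ((N:ℝ) - d) * (ε - g n)) Filter.atTop
      (nhds (((N:ℝ) - d) * ε)) := by
    have := (tendsto_const_nhds (x := ε) (f := Filter.atTop (α := ℕ))).sub hgtend
    rw [sub_zero] at this
    exact tendsto_const_nhds.mul this
  have hfinal := le_of_tendsto_of_tendsto' hL hTenR hkey
  linarith [hfinal]
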